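/- Let n ≥ 0 and let S = {Z ∈ ℂ^{n+1} : Σ_{j=1}^{n+1} |Z_j|² = 1} be the unit sphere. The set of polynomial maps X = (X_1,…,X_{n+1}) : ℂ^{n+1} → ℂ^{n+1}, with each component a complex polynomial of degree at most 2 in Z_1,…,Z_{n+1}, satisfying Re(Σ_{j=1}^{n+1} X_j(Z)·conj(Z_j)) = 0 for all Z ∈ S, is a real vector space of real dimension n² + 4n + 3. -/

import Mathlib

open scoped BigOperators

noncomputable section

/-- `X : ℂ^{n+1} → ℂ^{n+1}` is a polynomial map each of whose components is a complex
polynomial of degree at most 2 in `Z_1, …, Z_{n+1}`. -/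
def IsPolyMapDeg2 (n : ℕ) (X : (Fin (n + 1) → ℂ) → (Fin (n + 1) → ℂ)) : Prop :=
  ∃ P : Fin (n + 1) → MvPolynomial (Fin (n + 1)) ℂ,
    (∀ j, (P j).totalDegree ≤ 2) ∧ ∀ Z j, X Z j = MvPolynomial.eval Z (P j)

/-- The set of polynomial maps of degree at most 2 whose induced real vector field is
tangent to the unit sphere `S = {Z : Σ_j |Z_j|² = 1}`, i.e. satisfying
`Re(Σ_j X_j(Z)·conj(Z_j)) = 0` for all `Z ∈ S`. -/
def SphereInfAut (n : ℕ) : Set ((Fin (n + 1) → ℂ) → (Fin (n + 1) → ℂ)) :=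
  {X | IsPolyMapDeg2 n X ∧
    ∀ Z : Fin (n + 1) → ℂ, (∑ j, Complex.normSq (Z j)) = 1 →
      (∑ j, X Z j * (starRingEnd ℂ) (Z j)).re = 0}


open MvPolynomial Complex


-- decomposition of a ℂ-polynomial into real and imaginary real polynomials
lemma sp_decomp {σ : Type*} (q : MvPolynomial σ ℂ) :
    ∃ a b : MvPolynomial σ ℝ,
      q = map Complex.ofRealHom a + C Complex.I * map Complex.ofRealHom b := by
  induction q using MvPolynomial.induction_on' with
  | monomial d c =>
    refine ⟨monomial d c.re, monomial d c.im, ?_⟩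
    rw [map_monomial, map_monomial]
    rw [C_mul_monomial]
    rw [← map_add]
    congr 1
    simp [Complex.ext_iff]
  | add p q hp hq =>
    obtain ⟨a1, b1, h1⟩ := hp
    obtain ⟨a2, b2, h2⟩ := hq
    refine ⟨a1 + a2, b1 + b2, ?_⟩
    rw [h1, h2, map_add, map_add]
    ring

lemma sp_eval_map_real {σ : Type*} (a : MvPolynomial σ ℝ) (v : σ → ℝ) :
    eval (fun i => (v i : ℂ)) (map Complex.ofRealHom a) = ((eval v a : ℝ) : ℂ) := by
  rw [eval_map]
  have := eval₂_comp_left Complex.ofRealHom (RingHom.id ℝ) v a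
  simp only [RingHom.comp_id] at this
  rw [show (fun i => (v i : ℂ)) = Complex.ofRealHom ∘ v from rfl, ← this]
  rfl

/-- A complex MvPolynomial vanishing at all real points is zero. -/
lemma sp_realPoints {σ : Type*} (q : MvPolynomial σ ℂ)
    (h : ∀ v : σ → ℝ, eval (fun i => (v i : ℂ)) q = 0) : q = 0 := by
  obtain ⟨a, b, rfl⟩ := sp_decomp q
  have ha : a = 0 := by
    apply MvPolynomial.funext (q := 0)
    intro v
    have := h v
    simp only [map_add, map_mul, eval_C, sp_eval_map_real] at this
    have hre := congrArg Complex.re this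
    simp at hre
    simp [hre]
  have hb : b = 0 := by
    apply MvPolynomial.funext (q := 0)
    intro v
    have := h v
    simp only [map_add, map_mul, eval_C, sp_eval_map_real] at this
    have him := congrArg Complex.im this
    simp at him
    simp [him]
  simp [ha, hb]

section fund
variable {σ : Type*}

lemma sp_aeval_eq_eval {τ : Type*} (f : τ → ℂ) (p : MvPolynomial τ ℂ) :
    aeval f p = eval f p := by
  rw [aeval_def]
  rfl

/-- A complex polynomial in variables (Z, W) vanishing whenever W = conj Z is zero. -/
lemma sp_fund (p : MvPolynomial (σ ⊕ σ) ℂ)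
    (h : ∀ Z : σ → ℂ,
      eval (Sum.elim Z (fun i => (starRingEnd ℂ) (Z i))) p = 0) : p = 0 := by
  set f : σ ⊕ σ → MvPolynomial (σ ⊕ σ) ℂ :=
    Sum.elim (fun i => X (Sum.inl i) + C Complex.I * X (Sum.inr i))
             (fun i => X (Sum.inl i) - C Complex.I * X (Sum.inr i)) with hf
  set g : σ ⊕ σ → MvPolynomial (σ ⊕ σ) ℂ :=
    Sum.elim (fun i => C (1/2 : ℂ) * (X (Sum.inl i) + X (Sum.inr i)))
             (fun i => C (-Complex.I/2) * (X (Sum.inl i) - X (Sum.inr i))) with hg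
  have hq : bind₁ f p = 0 := by
    apply sp_realPoints
    intro v
    have heval : ∀ s, eval (fun i => (v i : ℂ)) (f s) =
        Sum.elim (fun i => ((v (Sum.inl i) : ℂ) + Complex.I * (v (Sum.inr i) : ℂ)))
          (fun i => (starRingEnd ℂ) ((v (Sum.inl i) : ℂ) + Complex.I * (v (Sum.inr i) : ℂ))) s := by
      rintro (i | i) <;>
        simp [hf, Complex.ext_iff]
    calc eval (fun i => (v i : ℂ)) (bind₁ f p)
        = aeval (fun i => (v i : ℂ)) (bind₁ f p) := (sp_aeval_eq_eval _ _).symm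
      _ = aeval (fun s => aeval (fun i => (v i : ℂ)) (f s)) p := aeval_bind₁ _ _ _
      _ = 0 := by
          rw [sp_aeval_eq_eval]
          rw [show (fun s => aeval (fun i => (v i : ℂ)) (f s))
              = fun s => eval (fun i => (v i : ℂ)) (f s) from
            funext fun s => sp_aeval_eq_eval _ _]
          rw [funext heval]
          exact h _
  have hI : (C Complex.I : MvPolynomial (σ ⊕ σ) ℂ) * C (-Complex.I/2) = C (1/2 : ℂ) := by
    rw [← C_mul]
    congr 1
    field_simp
    simp [Complex.I_sq]
  have hhalf : (C (1/2 : ℂ) : MvPolynomial (σ ⊕ σ) ℂ) + C (1/2 : ℂ) = 1 := by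
    rw [← C_add, ← C_1]
    norm_num
  have hgf : ∀ s, bind₁ g (f s) = X s := by
    rintro (i | i) <;>
      simp only [hf, hg, Sum.elim_inl, Sum.elim_inr, map_add, map_sub, map_mul,
        bind₁_X_right, bind₁_C_right]
    · linear_combination (X (Sum.inl i) - X (Sum.inr i)) * hI + X (Sum.inl i) * hhalf
    · linear_combination (-(X (Sum.inl i) - X (Sum.inr i))) * hI + X (Sum.inr i) * hhalf
  calc p = bind₁ X p := by rw [bind₁_X_left]; rfl
    _ = bind₁ (fun s => bind₁ g (f s)) p := by rw [funext hgf]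
    _ = bind₁ g (bind₁ f p) := (bind₁_bind₁ _ _ _).symm
    _ = 0 := by rw [hq, map_zero]

end fund

lemma sp_eval_smul {σ : Type*} {p : MvPolynomial σ ℂ} {k : ℕ} (hp : p.IsHomogeneous k)
    (t : ℂ) (Z : σ → ℂ) :
    eval (fun i => t * Z i) p = t ^ k * eval Z p := by
  rw [eval_eq, eval_eq, Finset.mul_sum]
  apply Finset.sum_congr rfl
  intro d hd
  have hdeg : ∑ i ∈ d.support, d i = k := by
    have := hp (mem_support_iff.mp hd)
    simpa [Finsupp.weight_apply, Finsupp.sum] using this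
  calc coeff d p * ∏ i ∈ d.support, (t * Z i) ^ d i
      = coeff d p * ((∏ i ∈ d.support, t ^ d i) * ∏ i ∈ d.support, Z i ^ d i) := by
        rw [← Finset.prod_mul_distrib]
        simp [mul_pow]
    _ = t ^ k * (coeff d p * ∏ i ∈ d.support, Z i ^ d i) := by
        rw [Finset.prod_pow_eq_pow_sum, hdeg]
        ring

lemma sp_decomp3 {σ : Type*} (p : MvPolynomial σ ℂ) (h : p.totalDegree ≤ 2) :
    p = homogeneousComponent 0 p + homogeneousComponent 1 p + homogeneousComponent 2 p := by
  have h3 : ∑ i ∈ Finset.range 3, homogeneousComponent i p = p := by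
    calc ∑ i ∈ Finset.range 3, homogeneousComponent i p
        = ∑ i ∈ Finset.range (p.totalDegree + 1), homogeneousComponent i p := by
          symm
          apply Finset.sum_subset
          · intro x hx
            simp only [Finset.mem_range] at hx ⊢
            omega
          · intro x _ hx
            simp only [Finset.mem_range, not_lt] at hx
            exact homogeneousComponent_eq_zero x p (by omega)
      _ = p := sum_homogeneousComponent p
  rw [Finset.sum_range_succ, Finset.sum_range_succ, Finset.sum_range_one] at h3
  exact h3.symm

-- conj of an evaluation
lemma sp_conj_eval {σ : Type*} (q : MvPolynomial σ ℂ) (Z : σ → ℂ) :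
    (starRingEnd ℂ) (eval Z q)
      = eval (fun i => (starRingEnd ℂ) (Z i)) (map (starRingEnd ℂ) q) := by
  rw [eval_map]
  have := eval₂_comp_left (starRingEnd ℂ) (RingHom.id ℂ) Z q
  simp only [RingHom.comp_id] at this
  rw [show (fun i => (starRingEnd ℂ) (Z i)) = (starRingEnd ℂ) ∘ Z from rfl, ← this]
  rfl

lemma sp_eval_map_single {σ : Type*} [DecidableEq σ] (q : MvPolynomial σ ℂ) (k : σ) :
    eval (Pi.single k (1:ℂ)) (map (starRingEnd ℂ) q)
      = (starRingEnd ℂ) (eval (Pi.single k (1:ℂ)) q) := by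
  rw [sp_conj_eval]
  congr 2
  funext i
  by_cases h : i = k
  · subst h; simp
  · simp [Pi.single_apply, h]

noncomputable def sphM {m : ℕ} (T : Matrix (Fin m) (Fin m) ℝ) (j k : Fin m) : ℂ :=
  ((T j k - T k j : ℝ) : ℂ) + ((T j k + T k j : ℝ) : ℂ) * Complex.I

lemma sphM_conj {m : ℕ} (T : Matrix (Fin m) (Fin m) ℝ) (j k : Fin m) :
    (starRingEnd ℂ) (sphM T j k) = - sphM T k j := by
  simp [sphM, Complex.ext_iff]
  ring

-- the polynomial witness for Φ(a,T)
lemma sph_poly_deg {n : ℕ} (a : Fin (n+1) → ℂ) (T : Matrix (Fin (n+1)) (Fin (n+1)) ℝ)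
    (j : Fin (n+1)) :
    (C (a j) + (∑ k, C (sphM T j k) * X k)
      - (∑ k, C ((starRingEnd ℂ) (a k)) * X k) * X j : MvPolynomial (Fin (n+1)) ℂ).totalDegree
        ≤ 2 := by
  have hsum : ∀ (c : Fin (n+1) → ℂ),
      (∑ k, C (c k) * X k : MvPolynomial (Fin (n+1)) ℂ).totalDegree ≤ 1 := by
    intro c
    refine (totalDegree_finset_sum _ _).trans ?_
    apply Finset.sup_le
    intro k _
    refine (totalDegree_mul _ _).trans ?_
    simp [totalDegree_C, totalDegree_X]
  rw [sub_eq_add_neg]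
  refine (totalDegree_add _ _).trans (max_le ?_ ?_)
  · refine (totalDegree_add _ _).trans (max_le ?_ ?_)
    · simp [totalDegree_C]
    · exact (hsum _).trans (by norm_num)
  · rw [show -((∑ k, C ((starRingEnd ℂ) (a k)) * X k) * X j)
        = (∑ k, C ((starRingEnd ℂ) (a k)) * X k) * (C (-1) * X j) by ring_nf; rw [map_neg, map_one]; ring]
    refine (totalDegree_mul _ _).trans ?_
    have h2 : (C (-1 : ℂ) * X j : MvPolynomial (Fin (n+1)) ℂ).totalDegree ≤ 1 := by
      refine (totalDegree_mul _ _).trans ?_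
      simp [totalDegree_C, totalDegree_X]
    have := hsum (fun k => (starRingEnd ℂ) (a k))
    omega

lemma sph_mem {n : ℕ} (a : Fin (n+1) → ℂ) (T : Matrix (Fin (n+1)) (Fin (n+1)) ℝ) :
    (fun Z j => a j + (∑ k, sphM T j k * Z k)
      - (∑ k, (starRingEnd ℂ) (a k) * Z k) * Z j) ∈ SphereInfAut n := by
  constructor
  · refine ⟨fun j => C (a j) + (∑ k, C (sphM T j k) * X k)
      - (∑ k, C ((starRingEnd ℂ) (a k)) * X k) * X j, fun j => sph_poly_deg a T j, ?_⟩
    intro Z j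
    simp [eval_C, eval_X, map_sum]
  · intro Z hZ
    set u : ℂ := ∑ j, a j * (starRingEnd ℂ) (Z j) with hu
    set S : ℂ := ∑ j, ∑ k, sphM T j k * Z k * (starRingEnd ℂ) (Z j) with hS
    have hρ : (∑ j, Z j * (starRingEnd ℂ) (Z j)) = 1 := by
      have : ∀ j, Z j * (starRingEnd ℂ) (Z j) = ((Complex.normSq (Z j) : ℝ) : ℂ) := by
        intro j; rw [Complex.mul_conj]
      rw [Finset.sum_congr rfl (fun j _ => this j), ← Complex.ofReal_sum, hZ]
      norm_num
    have expand : (∑ j, (a j + (∑ k, sphM T j k * Z k)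
        - (∑ k, (starRingEnd ℂ) (a k) * Z k) * Z j) * (starRingEnd ℂ) (Z j))
        = u + S - (∑ k, (starRingEnd ℂ) (a k) * Z k) * ∑ j, Z j * (starRingEnd ℂ) (Z j) := by
      rw [hu, hS, Finset.mul_sum, ← Finset.sum_add_distrib, ← Finset.sum_sub_distrib]
      apply Finset.sum_congr rfl
      intro j _
      rw [← Finset.sum_mul]
      ring
    have hcu : (∑ k, (starRingEnd ℂ) (a k) * Z k) = (starRingEnd ℂ) u := by
      rw [hu, map_sum]
      apply Finset.sum_congr rfl
      intro k _
      rw [map_mul, Complex.conj_conj]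
    have hconjS : (starRingEnd ℂ) S = -S := by
      have h1 : (starRingEnd ℂ) S = ∑ j, ∑ k, -(sphM T k j * Z j * (starRingEnd ℂ) (Z k)) := by
        rw [hS, map_sum]
        apply Finset.sum_congr rfl
        intro j _
        rw [map_sum]
        apply Finset.sum_congr rfl
        intro k _
        rw [map_mul, map_mul, sphM_conj, Complex.conj_conj]
        ring
      rw [h1, Finset.sum_comm, hS]
      simp
    rw [expand, hρ, mul_one, hcu]
    have h2 : S.re = 0 := by
      have := congrArg Complex.re hconjS
      simp only [Complex.conj_re, Complex.neg_re] at this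
      linarith
    simp [Complex.sub_re, Complex.add_re, h2, Complex.conj_re]
/-- The parametrization of infinitesimal automorphisms by a vector and a real matrix. -/
noncomputable def sphPhi (n : ℕ) :
    ((Fin (n+1) → ℂ) × Matrix (Fin (n+1)) (Fin (n+1)) ℝ) →ₗ[ℝ]
      ((Fin (n+1) → ℂ) → (Fin (n+1) → ℂ)) where
  toFun := fun aT Z j =>
    aT.1 j + (∑ k, sphM aT.2 j k * Z k)
      - (∑ k, (starRingEnd ℂ) (aT.1 k) * Z k) * Z j
  map_add' := by
    intro a b
    funext Z j
    simp only [Prod.fst_add, Prod.snd_add, Pi.add_apply, Matrix.add_apply, map_add]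
    have h1 : (∑ k, sphM (a.2 + b.2) j k * Z k)
        = (∑ k, sphM a.2 j k * Z k) + ∑ k, sphM b.2 j k * Z k := by
      rw [← Finset.sum_add_distrib]
      apply Finset.sum_congr rfl
      intro k _
      simp only [sphM, Matrix.add_apply]
      push_cast
      ring
    have h2 : (∑ k, ((starRingEnd ℂ) (a.1 k) + (starRingEnd ℂ) (b.1 k)) * Z k)
        = (∑ k, (starRingEnd ℂ) (a.1 k) * Z k) + ∑ k, (starRingEnd ℂ) (b.1 k) * Z k := by
      rw [← Finset.sum_add_distrib]
      apply Finset.sum_congr rfl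
      intro k _
      ring
    rw [h1, h2]
    ring
  map_smul' := by
    intro r a
    funext Z j
    simp only [Prod.smul_fst, Prod.smul_snd, Pi.smul_apply, Matrix.smul_apply,
      RingHom.id_apply, smul_eq_mul, Complex.real_smul]
    have h1 : (∑ k, sphM (r • a.2) j k * Z k) = (r : ℂ) * ∑ k, sphM a.2 j k * Z k := by
      rw [Finset.mul_sum]
      apply Finset.sum_congr rfl
      intro k _
      simp only [sphM, Matrix.smul_apply, smul_eq_mul]
      push_cast
      ring
    have h2 : (∑ k, (starRingEnd ℂ) ((r : ℂ) * a.1 k) * Z k)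
        = (r : ℂ) * ∑ k, (starRingEnd ℂ) (a.1 k) * Z k := by
      rw [Finset.mul_sum]
      apply Finset.sum_congr rfl
      intro k _
      rw [map_mul, Complex.conj_ofReal]
      ring
    rw [h1, h2]
    ring

lemma sphPhi_injective (n : ℕ) : Function.Injective (sphPhi n) := by
  rw [← LinearMap.ker_eq_bot]
  rw [LinearMap.ker_eq_bot']
  rintro ⟨a, T⟩ h
  have h0 : ∀ j, a j = 0 := by
    intro j
    have := congrFun (congrFun h 0) j
    simpa [sphPhi] using this
  have hT : ∀ j k, sphM T j k = 0 := by
    intro j k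
    have := congrFun (congrFun h (Pi.single k 1)) j
    simp only [sphPhi, LinearMap.coe_mk, AddHom.coe_mk, Pi.zero_apply, h0] at this
    simp only [Pi.single_apply, mul_ite, mul_one, mul_zero, map_zero, zero_mul,
      Finset.sum_ite_eq', Finset.mem_univ, if_true, Finset.sum_const_zero, zero_sub,
      sub_zero, neg_eq_zero] at this
    simpa using this
  have hTT : T = 0 := by
    ext j k
    have h1 := congrArg Complex.re (hT j k)
    have h2 := congrArg Complex.im (hT j k)
    simp [sphM] at h1 h2
    simp only [Matrix.zero_apply]
    linarith
  rw [show a = 0 from funext h0, hTT]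
  rfl

lemma sph_hard {n : ℕ} (Xf : (Fin (n + 1) → ℂ) → (Fin (n + 1) → ℂ))
    (hX : Xf ∈ SphereInfAut n) :
    ∃ (a : Fin (n+1) → ℂ) (T : Matrix (Fin (n+1)) (Fin (n+1)) ℝ),
      (fun Z j => a j + (∑ k, sphM T j k * Z k)
        - (∑ k, (starRingEnd ℂ) (a k) * Z k) * Z j) = Xf := by
  obtain ⟨⟨P, hdeg, hXP⟩, htan⟩ := hX
  set h1 : Fin (n+1) → MvPolynomial (Fin (n+1)) ℂ :=
    fun j => homogeneousComponent 1 (P j) with hh1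
  set h2 : Fin (n+1) → MvPolynomial (Fin (n+1)) ℂ :=
    fun j => homogeneousComponent 2 (P j) with hh2
  set c : Fin (n+1) → ℂ := fun j => coeff 0 (P j) with hc
  -- decomposition
  have hdec : ∀ Z j, Xf Z j = c j + eval Z (h1 j) + eval Z (h2 j) := by
    intro Z j
    rw [hXP Z j]
    conv_lhs => rw [sp_decomp3 (P j) (hdeg j)]
    rw [map_add, map_add, homogeneousComponent_zero, eval_C]
  set u : (Fin (n+1) → ℂ) → ℂ := fun Z => ∑ j, c j * (starRingEnd ℂ) (Z j) with hu
  set w : (Fin (n+1) → ℂ) → ℂ := fun Z => ∑ j, eval Z (h1 j) * (starRingEnd ℂ) (Z j) with hw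
  set v : (Fin (n+1) → ℂ) → ℂ := fun Z => ∑ j, eval Z (h2 j) * (starRingEnd ℂ) (Z j) with hv
  have htan' : ∀ Z : Fin (n+1) → ℂ, (∑ j, Complex.normSq (Z j)) = 1 →
      (u Z + w Z + v Z).re = 0 := by
    intro Z hZ
    have h0 := htan Z hZ
    rw [show (∑ j, Xf Z j * (starRingEnd ℂ) (Z j)) = u Z + w Z + v Z by
      rw [hu, hw, hv]
      simp only
      rw [← Finset.sum_add_distrib, ← Finset.sum_add_distrib]
      apply Finset.sum_congr rfl
      intro j _
      rw [hdec Z j]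
      ring] at h0
    exact h0
  -- scaling
  have hsc : ∀ (t : ℂ) (Z : Fin (n+1) → ℂ),
      u (fun i => t * Z i) = (starRingEnd ℂ) t * u Z
      ∧ w (fun i => t * Z i) = t * (starRingEnd ℂ) t * w Z
      ∧ v (fun i => t * Z i) = t^2 * (starRingEnd ℂ) t * v Z := by
    intro t Z
    refine ⟨?_, ?_, ?_⟩
    · rw [hu]
      simp only
      rw [Finset.mul_sum]
      exact Finset.sum_congr rfl fun j _ => by rw [map_mul]; ring
    · rw [hw]
      simp only
      rw [Finset.mul_sum]
      refine Finset.sum_congr rfl fun j _ => ?_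
      rw [sp_eval_smul (homogeneousComponent_isHomogeneous 1 (P j)) t Z, map_mul]
      ring
    · rw [hv]
      simp only
      rw [Finset.mul_sum]
      refine Finset.sum_congr rfl fun j _ => ?_
      rw [sp_eval_smul (homogeneousComponent_isHomogeneous 2 (P j)) t Z, map_mul]
      ring
  have hnsc : ∀ (t : ℂ) (Z : Fin (n+1) → ℂ),
      (∑ j, Complex.normSq (t * Z j)) = Complex.normSq t * ∑ j, Complex.normSq (Z j) := by
    intro t Z
    rw [Finset.mul_sum]
    exact Finset.sum_congr rfl fun j _ => by rw [Complex.normSq_mul]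
  -- sphere identities
  have hsphere : ∀ Z : Fin (n+1) → ℂ, (∑ j, Complex.normSq (Z j)) = 1 →
      (w Z).re = 0 ∧ v Z = -(starRingEnd ℂ) (u Z) := by
    intro Z hZ
    have e1 := htan' Z hZ
    have e2 : (-(u Z) + w Z + -(v Z)).re = 0 := by
      have hm := htan' (fun i => (-1 : ℂ) * Z i) (by rw [hnsc]; simp [hZ])
      obtain ⟨s1, s2, s3⟩ := hsc (-1) Z
      rw [s1, s2, s3] at hm
      simpa using hm
    have e3 : (-(Complex.I) * u Z + w Z + Complex.I * v Z).re = 0 := by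
      have hm := htan' (fun i => Complex.I * Z i) (by rw [hnsc]; simp [hZ])
      obtain ⟨s1, s2, s3⟩ := hsc Complex.I Z
      rw [s1, s2, s3] at hm
      rw [show (starRingEnd ℂ) Complex.I = -Complex.I by simp [Complex.ext_iff]] at hm
      rw [show Complex.I * -Complex.I * w Z = w Z by
        rw [mul_neg, Complex.I_mul_I]; ring] at hm
      rw [show Complex.I ^ 2 * -Complex.I * v Z = Complex.I * v Z by
        rw [Complex.I_sq]; ring] at hm
      exact hm
    simp only [Complex.add_re, Complex.neg_re, Complex.mul_re, Complex.neg_im,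
      Complex.I_re, Complex.I_im] at e1 e2 e3
    constructor
    · linarith
    · apply Complex.ext
      · simp only [Complex.neg_re, Complex.conj_re]
        linarith
      · simp only [Complex.neg_im, Complex.conj_im]
        linarith
  -- zero case
  have hzero : ∀ Z : Fin (n+1) → ℂ, (∑ j, Complex.normSq (Z j)) = 0 → Z = fun _ => (0:ℂ) := by
    intro Z hZ
    funext i
    have h0 : ∀ j ∈ (Finset.univ : Finset (Fin (n+1))), (0:ℝ) ≤ Complex.normSq (Z j) :=
      fun j _ => Complex.normSq_nonneg _
    have := (Finset.sum_eq_zero_iff_of_nonneg h0).mp hZ i (Finset.mem_univ i)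
    exact Complex.normSq_eq_zero.mp this
  have hu0 : u (fun _ => (0:ℂ)) = 0 := by rw [hu]; simp
  have hw0 : w (fun _ => (0:ℂ)) = 0 := by rw [hw]; simp
  have hv0 : v (fun _ => (0:ℂ)) = 0 := by rw [hv]; simp
  -- normalization setup, packaged
  have IWV : ∀ Z : Fin (n+1) → ℂ, (w Z).re = 0 ∧
      v Z = -(((∑ j, Complex.normSq (Z j)) : ℝ) : ℂ) * (starRingEnd ℂ) (u Z) := by
    intro Z
    rcases eq_or_lt_of_le (Finset.sum_nonneg
      fun j _ => Complex.normSq_nonneg (Z j)) with h | h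
    · rw [hzero Z h.symm, hw0, hv0, hu0]
      simp
    · set r : ℝ := Real.sqrt (∑ j, Complex.normSq (Z j)) with hr
      have hrpos : 0 < r := Real.sqrt_pos.mpr h
      have hs : r^2 = ∑ j, Complex.normSq (Z j) := Real.sq_sqrt h.le
      set W : Fin (n+1) → ℂ := fun i => ((r⁻¹ : ℝ) : ℂ) * Z i with hW
      have hWs : (∑ j, Complex.normSq (W j)) = 1 := by
        rw [hW, hnsc, Complex.normSq_ofReal, ← hs]
        field_simp
      have hZW : Z = fun i => ((r:ℝ):ℂ) * W i := by
        funext i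
        rw [hW, ← mul_assoc, ← Complex.ofReal_mul, mul_inv_cancel₀ (ne_of_gt hrpos)]
        simp
      have hwr : w Z = ((r:ℝ):ℂ) * (starRingEnd ℂ) ((r:ℝ):ℂ) * w W := by
        conv_lhs => rw [hZW]
        exact (hsc ((r:ℝ):ℂ) W).2.1
      have hur : u Z = (starRingEnd ℂ) ((r:ℝ):ℂ) * u W := by
        conv_lhs => rw [hZW]
        exact (hsc ((r:ℝ):ℂ) W).1
      have hvr : v Z = ((r:ℝ):ℂ)^2 * (starRingEnd ℂ) ((r:ℝ):ℂ) * v W := by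
        conv_lhs => rw [hZW]
        exact (hsc ((r:ℝ):ℂ) W).2.2
      obtain ⟨hWw, hWv⟩ := hsphere W hWs
      constructor
      · rw [hwr, Complex.conj_ofReal, ← Complex.ofReal_mul]
        simp [Complex.mul_re, hWw]
      · rw [hvr, hur, hWv, map_mul, Complex.conj_conj, Complex.conj_ofReal, ← hs]
        push_cast
        ring
  -- evaluation over sum types
  have hevL : ∀ (Z W : Fin (n+1) → ℂ) (q : MvPolynomial (Fin (n+1)) ℂ),
      eval (Sum.elim Z W) (rename Sum.inl q) = eval Z q := by
    intro Z W q
    rw [eval_rename]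
    rfl
  have hevR : ∀ (Z W : Fin (n+1) → ℂ) (q : MvPolynomial (Fin (n+1)) ℂ),
      eval (Sum.elim Z W) (rename Sum.inr q) = eval W q := by
    intro Z W q
    rw [eval_rename]
    rfl
  -- first application: the linear part
  set p1 : MvPolynomial (Fin (n+1) ⊕ Fin (n+1)) ℂ :=
    (∑ j, rename Sum.inl (h1 j) * X (Sum.inr j))
    + ∑ j, rename Sum.inr (map (starRingEnd ℂ) (h1 j)) * X (Sum.inl j) with hp1
  have hp1eval : ∀ Z W : Fin (n+1) → ℂ, eval (Sum.elim Z W) p1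
      = (∑ j, eval Z (h1 j) * W j)
        + ∑ j, eval W (map (starRingEnd ℂ) (h1 j)) * Z j := by
    intro Z W
    rw [hp1, map_add, map_sum, map_sum]
    congr 1
    · exact Finset.sum_congr rfl fun j _ => by rw [map_mul, hevL, eval_X, Sum.elim_inr]
    · exact Finset.sum_congr rfl fun j _ => by rw [map_mul, hevR, eval_X, Sum.elim_inl]
  have hp10 : p1 = 0 := by
    apply sp_fund
    intro Z
    rw [hp1eval]
    have hc2 : (∑ j, eval (fun i => (starRingEnd ℂ) (Z i)) (map (starRingEnd ℂ) (h1 j)) * Z j)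
        = (starRingEnd ℂ) (w Z) := by
      rw [hw, map_sum]
      exact Finset.sum_congr rfl fun j _ => by
        rw [map_mul, Complex.conj_conj, ← sp_conj_eval]
    rw [hc2, show (∑ j, eval Z (h1 j) * (starRingEnd ℂ) (Z j)) = w Z from rfl,
      Complex.add_conj, (IWV Z).1]
    simp
  have hLp : ∀ (Z W : Fin (n+1) → ℂ), (∑ j, eval Z (h1 j) * W j)
      + ∑ j, eval W (map (starRingEnd ℂ) (h1 j)) * Z j = 0 := by
    intro Z W
    rw [← hp1eval, hp10, map_zero]
  set A : Fin (n+1) → Fin (n+1) → ℂ := fun j k => eval (Pi.single k 1) (h1 j) with hA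
  have hL : ∀ (Z : Fin (n+1) → ℂ) (k), eval Z (h1 k)
      = -∑ j, (starRingEnd ℂ) (A j k) * Z j := by
    intro Z k
    have hLpk := hLp Z (Pi.single k 1)
    have e1 : (∑ j, eval Z (h1 j) * (Pi.single k 1 : Fin (n+1) → ℂ) j) = eval Z (h1 k) := by
      rw [Finset.sum_eq_single k]
      · simp
      · intro b _ hb
        simp [Pi.single_apply, hb]
      · intro hk
        exact absurd (Finset.mem_univ k) hk
    have e2 : (∑ j, eval (Pi.single k (1:ℂ)) (map (starRingEnd ℂ) (h1 j)) * Z j)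
        = ∑ j, (starRingEnd ℂ) (A j k) * Z j :=
      Finset.sum_congr rfl fun j _ => by rw [sp_eval_map_single, hA]
    rw [e1, e2] at hLpk
    exact eq_neg_of_add_eq_zero_left hLpk
  have hskew : ∀ k l, A k l = -(starRingEnd ℂ) (A l k) := by
    intro k l
    have := hL (Pi.single l 1) k
    rw [hA] at this ⊢
    simp only at this ⊢
    rw [this, Finset.sum_eq_single l]
    · simp
    · intro b _ hb
      simp [Pi.single_apply, hb]
    · intro hk
      exact absurd (Finset.mem_univ l) hk
  -- second application: the quadratic part
  set p2 : MvPolynomial (Fin (n+1) ⊕ Fin (n+1)) ℂ :=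
    (∑ j, rename Sum.inl (h2 j) * X (Sum.inr j))
    + (∑ k, X (Sum.inl k) * X (Sum.inr k))
        * (∑ l, C ((starRingEnd ℂ) (c l)) * X (Sum.inl l)) with hp2
  have hp2eval : ∀ Z W : Fin (n+1) → ℂ, eval (Sum.elim Z W) p2
      = (∑ j, eval Z (h2 j) * W j)
        + (∑ k, Z k * W k) * (∑ l, (starRingEnd ℂ) (c l) * Z l) := by
    intro Z W
    rw [hp2, map_add, map_sum, map_mul, map_sum, map_sum]
    congr 1
    · exact Finset.sum_congr rfl fun j _ => by rw [map_mul, hevL, eval_X, Sum.elim_inr]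
    · congr 1
      · exact Finset.sum_congr rfl fun k _ => by
          rw [map_mul, eval_X, eval_X, Sum.elim_inl, Sum.elim_inr]
      · exact Finset.sum_congr rfl fun l _ => by
          rw [map_mul, eval_C, eval_X, Sum.elim_inl]
  have hρC : ∀ Z : Fin (n+1) → ℂ, (∑ k, Z k * (starRingEnd ℂ) (Z k))
      = (((∑ j, Complex.normSq (Z j)) : ℝ) : ℂ) := by
    intro Z
    rw [Complex.ofReal_sum]
    exact Finset.sum_congr rfl fun k _ => by rw [Complex.mul_conj]
  have hconju : ∀ Z : Fin (n+1) → ℂ, (∑ l, (starRingEnd ℂ) (c l) * Z l)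
      = (starRingEnd ℂ) (u Z) := by
    intro Z
    rw [hu, map_sum]
    exact Finset.sum_congr rfl fun l _ => by rw [map_mul, Complex.conj_conj]
  have hp20 : p2 = 0 := by
    apply sp_fund
    intro Z
    rw [hp2eval, hρC, hconju,
      show (∑ j, eval Z (h2 j) * (starRingEnd ℂ) (Z j)) = v Z from rfl, (IWV Z).2]
    ring
  have hQ : ∀ (Z : Fin (n+1) → ℂ) (m), eval Z (h2 m)
      = -((∑ l, (starRingEnd ℂ) (c l) * Z l) * Z m) := by
    intro Z m
    have hq := hp2eval Z (Pi.single m 1)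
    rw [hp20, map_zero] at hq
    have e1 : (∑ j, eval Z (h2 j) * (Pi.single m 1 : Fin (n+1) → ℂ) j) = eval Z (h2 m) := by
      rw [Finset.sum_eq_single m]
      · simp
      · intro b _ hb
        simp [Pi.single_apply, hb]
      · intro hk
        exact absurd (Finset.mem_univ m) hk
    have e2 : (∑ k, Z k * (Pi.single m 1 : Fin (n+1) → ℂ) k) = Z m := by
      rw [Finset.sum_eq_single m]
      · simp
      · intro b _ hb
        simp [Pi.single_apply, hb]
      · intro hk
        exact absurd (Finset.mem_univ m) hk
    rw [e1, e2] at hq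
    have := eq_neg_of_add_eq_zero_left hq.symm
    rw [this]
    ring
  -- assembly
  refine ⟨c, fun j k => ((A j k).re + (A j k).im)/2, ?_⟩
  funext Z j
  beta_reduce
  rw [hdec Z j]
  have hMA : ∀ j k : Fin (n+1),
      sphM (fun j k => ((A j k).re + (A j k).im)/2 : Matrix (Fin (n+1)) (Fin (n+1)) ℝ) j k
        = A j k := by
    intro j k
    have hs1 := hskew k j
    have hre : (A k j).re = -(A j k).re := by rw [hs1]; simp
    have him : (A k j).im = (A j k).im := by rw [hs1]; simp
    apply Complex.ext
    · simp only [sphM, Complex.add_re, Complex.ofReal_re, Complex.mul_re, Complex.I_re,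
        Complex.I_im, Complex.ofReal_im]
      rw [hre, him]
      ring
    · simp only [sphM, Complex.add_im, Complex.ofReal_im, Complex.mul_im, Complex.I_re,
        Complex.I_im, Complex.ofReal_re]
      rw [hre, him]
      ring
  have hsum1 : (∑ k, sphM (fun j k => ((A j k).re + (A j k).im)/2
      : Matrix (Fin (n+1)) (Fin (n+1)) ℝ) j k * Z k) = eval Z (h1 j) := by
    rw [hL Z j, ← Finset.sum_neg_distrib]
    refine Finset.sum_congr rfl fun k _ => ?_
    rw [hMA j k, hskew j k]
    ring
  rw [hsum1, hQ Z j]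
  ring

/-- Let `n ≥ 0` and `S ⊆ ℂ^{n+1}` the unit sphere.  The set of
polynomial maps `X : ℂ^{n+1} → ℂ^{n+1}` of degree at most `2` satisfying
`Re(Σ_j X_j(Z)·conj(Z_j)) = 0` for all `Z ∈ S` is a real vector space of real dimension
`n² + 4n + 3`: it is (the coercion of) a real submodule of finrank `n² + 4n + 3`. -/
theorem statement10 (n : ℕ) :
    ∃ S : Submodule ℝ ((Fin (n + 1) → ℂ) → (Fin (n + 1) → ℂ)),
      (S : Set _) = SphereInfAut n ∧ Module.Finite ℝ S ∧
      Module.finrank ℝ S = n ^ 2 + 4 * n + 3 := by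
  refine ⟨LinearMap.range (sphPhi n), ?_, ?_, ?_⟩
  · ext Xf
    simp only [SetLike.mem_coe, LinearMap.mem_range]
    constructor
    · rintro ⟨⟨a, T⟩, rfl⟩
      exact sph_mem a T
    · intro hXf
      obtain ⟨a, T, heq⟩ := sph_hard Xf hXf
      exact ⟨(a, T), heq⟩
  · exact Module.Finite.range _
  · rw [LinearMap.finrank_range_of_inj (sphPhi_injective n)]
    rw [Module.finrank_prod, Module.finrank_pi_fintype, Module.finrank_matrix]
    simp only [Complex.finrank_real_complex, Module.finrank_self, Finset.sum_const,
      Finset.card_univ, Fintype.card_fin, smul_eq_mul]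
    ring
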